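/- Let λ₁,…,λₙ be real numbers with λᵢ ≥ 1 for all i and λ₁ + ⋯ + λₙ = 2n. Then λ₁ ⋯ λₙ ≥ n + 1. -/

import Mathlib

/-! Writing `λᵢ = 1 + xᵢ` with `xᵢ ≥ 0` and `∑ xᵢ = n`, the expansion of `∏ (1 + xᵢ)` has only
nonnegative terms, among them `1` and every `xᵢ`, so it is at least `1 + ∑ xᵢ = n + 1`. -/

theorem Finset.one_add_sum_le_prod_one_add {ι R : Type*} [CommSemiring R] [PartialOrder R]
    [IsOrderedRing R] (s : Finset ι) {f : ι → R} (hf : ∀ i ∈ s, 0 ≤ f i) :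
    1 + ∑ i ∈ s, f i ≤ ∏ i ∈ s, (1 + f i) := by
  induction s using Finset.cons_induction with
  | empty => simp
  | cons a s _ ih =>
    rw [Finset.sum_cons, Finset.prod_cons]
    have hfa : 0 ≤ f a := hf a (Finset.mem_cons_self a s)
    have hfs : ∀ i ∈ s, 0 ≤ f i := fun i hi => hf i (Finset.mem_cons_of_mem hi)
    have hprod := ih hfs
    calc 1 + (f a + ∑ i ∈ s, f i)
        ≤ 1 + (f a + ∑ i ∈ s, f i) + f a * ∑ i ∈ s, f i :=
          le_add_of_nonneg_right (mul_nonneg hfa (Finset.sum_nonneg hfs))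
      _ = (1 + ∑ i ∈ s, f i) + f a * (1 + ∑ i ∈ s, f i) := by ring
      _ ≤ ∏ i ∈ s, (1 + f i) + f a * ∏ i ∈ s, (1 + f i) := by gcongr
      _ = (1 + f a) * ∏ i ∈ s, (1 + f i) := by ring

/-- If `λ₁,…,λₙ` are reals with each `λᵢ ≥ 1` and `∑ λᵢ = 2n`, then
`∏ λᵢ ≥ n + 1`. -/
theorem prod_ge_of_ge_one_sum_eq (n : ℕ) (l : Fin n → ℝ)
    (h1 : ∀ i, 1 ≤ l i) (hsum : ∑ i, l i = 2 * n) :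
    (n : ℝ) + 1 ≤ ∏ i, l i := by
  have hexcess : ∑ i, (l i - 1) = n := by
    rw [Finset.sum_sub_distrib, hsum]
    simp only [Finset.sum_const, Finset.card_univ, Fintype.card_fin, nsmul_eq_mul, mul_one]
    ring
  calc (n : ℝ) + 1 = 1 + ∑ i, (l i - 1) := by rw [hexcess, add_comm]
    _ ≤ ∏ i, (1 + (l i - 1)) :=
      Finset.univ.one_add_sum_le_prod_one_add fun i _ => sub_nonneg.mpr (h1 i)
    _ = ∏ i, l i := by simp only [add_sub_cancel]
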